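/- Let g : ℝⁿ → ℝ be differentiable with L_g-Lipschitz gradient, L_g > 0, and let x ∈ ℝⁿ satisfy g(x) < 0. Let v ∈ ℝⁿ and α ≥ 0 be such that α·‖v‖ ≤ (−2·g(x)) / (‖∇g(x)‖ + √(‖∇g(x)‖² − 2·L_g·g(x))). Then g(x + α·v) ≤ 0. -/

import Mathlib

open intervalIntegral in
lemma descent {n : ℕ} (g : EuclideanSpace ℝ (Fin n) → ℝ) (Lg : ℝ) (hLg : 0 < Lg)
    (hdiff : Differentiable ℝ g)
    (hlip : ∀ x y, ‖gradient g x - gradient g y‖ ≤ Lg * ‖x - y‖)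
    (x w : EuclideanSpace ℝ (Fin n)) :
    g (x + w) ≤ g x + inner ℝ (gradient g x) w + Lg / 2 * ‖w‖ ^ 2 := by
  set φ : ℝ → ℝ := fun t => g (x + t • w) with hφ
  have hline : ∀ t : ℝ, HasDerivAt (fun s : ℝ => x + s • w) w t := fun t => by
    simpa using ((hasDerivAt_id t).smul_const w).const_add x
  have hder : ∀ t : ℝ, HasDerivAt φ (inner ℝ (gradient g (x + t • w)) w) t := by
    intro t
    have := ((hdiff (x + t • w)).hasGradientAt.hasFDerivAt).comp_hasDerivAt t (hline t)
    rw [hφ]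
    simpa [InnerProductSpace.toDual_apply_apply, Function.comp_def] using this
  have hgradcont : Continuous fun p => gradient g p := by
    have : LipschitzWith ⟨Lg, hLg.le⟩ fun p => gradient g p := by
      apply LipschitzWith.of_dist_le_mul
      intro a b
      rw [dist_eq_norm, dist_eq_norm]; exact hlip a b
    exact this.continuous
  have hcont : Continuous fun t : ℝ => (inner ℝ (gradient g (x + t • w)) w : ℝ) :=
    Continuous.inner (hgradcont.comp (continuous_const.add (continuous_id.smul continuous_const))) continuous_const
  have heq : ∫ t in (0:ℝ)..1, (inner ℝ (gradient g (x + t • w)) w : ℝ) = φ 1 - φ 0 :=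
    integral_eq_sub_of_hasDerivAt (fun t _ => hder t) (hcont.intervalIntegrable 0 1)
  have hbound : ∫ t in (0:ℝ)..1, (inner ℝ (gradient g (x + t • w)) w : ℝ) ≤
      ∫ t in (0:ℝ)..1, (inner ℝ (gradient g x) w + Lg * t * ‖w‖ ^ 2 : ℝ) := by
    apply integral_mono_on (by norm_num) (hcont.intervalIntegrable 0 1)
    · exact (Continuous.intervalIntegrable (by continuity) 0 1)
    · intro t ht
      have h1 : (inner ℝ (gradient g (x + t • w)) w : ℝ) - inner ℝ (gradient g x) w
          = inner ℝ (gradient g (x + t • w) - gradient g x) w := by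
        rw [inner_sub_left]
      have h2 : (inner ℝ (gradient g (x + t • w) - gradient g x) w : ℝ) ≤
          ‖gradient g (x + t • w) - gradient g x‖ * ‖w‖ := real_inner_le_norm _ _
      have h3 : ‖gradient g (x + t • w) - gradient g x‖ ≤ Lg * (t * ‖w‖) := by
        have := hlip (x + t • w) x
        simpa [norm_smul, abs_of_nonneg ht.1] using this
      nlinarith [norm_nonneg w, h2, mul_le_mul_of_nonneg_right h3 (norm_nonneg w)]
  have hint : ∫ t in (0:ℝ)..1, (inner ℝ (gradient g x) w + Lg * t * ‖w‖ ^ 2 : ℝ)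
      = inner ℝ (gradient g x) w + Lg / 2 * ‖w‖ ^ 2 := by
    have h1 : (fun t : ℝ => (inner ℝ (gradient g x) w : ℝ) + Lg * t * ‖w‖ ^ 2)
        = fun t : ℝ => (inner ℝ (gradient g x) w : ℝ) + (Lg * ‖w‖ ^ 2) * t := by
      ext t; ring
    have c2 : Continuous fun t : ℝ => Lg * ‖w‖ ^ 2 * t := continuous_const.mul continuous_id
    rw [h1, integral_add (continuous_const.intervalIntegrable 0 1)
      (c2.intervalIntegrable 0 1),
      integral_const_mul, integral_id, integral_const]
    norm_num
    ring
  have hfin : φ 1 - φ 0 ≤ inner ℝ (gradient g x) w + Lg / 2 * ‖w‖ ^ 2 := by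
    rw [← heq]; rw [hint] at hbound; exact hbound
  have e1 : φ 1 = g (x + w) := by simp [hφ]
  have e0 : φ 0 = g x := by simp [hφ]
  rw [e1, e0] at hfin
  linarith

theorem stmt19 {n : ℕ} (hn : 0 < n)
    (g : EuclideanSpace ℝ (Fin n) → ℝ)
    (Lg : ℝ) (hLg : 0 < Lg)
    (hdiff : Differentiable ℝ g)
    (hlip : ∀ x y, ‖gradient g x - gradient g y‖ ≤ Lg * ‖x - y‖)
    (x : EuclideanSpace ℝ (Fin n)) (hx : g x < 0)
    (v : EuclideanSpace ℝ (Fin n)) (α : ℝ) (hα : 0 ≤ α)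
    (hstep : α * ‖v‖ ≤ (-2 * g x) /
        (‖gradient g x‖ + Real.sqrt (‖gradient g x‖ ^ 2 - 2 * Lg * g x))) :
    g (x + α • v) ≤ 0 := by
  set G := ‖gradient g x‖ with hG
  set s := Real.sqrt (G ^ 2 - 2 * Lg * g x) with hs
  set t := α * ‖v‖ with ht
  have htnn : 0 ≤ t := mul_nonneg hα (norm_nonneg v)
  have hGnn : 0 ≤ G := norm_nonneg _
  have hs2 : s ^ 2 = G ^ 2 - 2 * Lg * g x := by
    rw [hs]; exact Real.sq_sqrt (by nlinarith)
  have hspos : 0 < s := by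
    rw [hs]; apply Real.sqrt_pos.mpr; nlinarith
  have hden : 0 < G + s := by linarith
  have hle : Lg * t ≤ s - G := by
    rw [le_div_iff₀ hden] at hstep
    have h := mul_le_mul_of_nonneg_left hstep hLg.le
    nlinarith
  have hd := descent g Lg hLg hdiff hlip x (α • v)
  have hnw : ‖α • v‖ = t := by rw [ht, norm_smul, Real.norm_eq_abs, abs_of_nonneg hα]
  have hinner : (inner ℝ (gradient g x) (α • v) : ℝ) ≤ G * t := by
    calc (inner ℝ (gradient g x) (α • v) : ℝ) ≤ ‖gradient g x‖ * ‖α • v‖ :=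
          real_inner_le_norm _ _
      _ = G * t := by rw [hnw]
  rw [hnw] at hd
  have hu : Lg * t + G ≤ s := by linarith
  have hsq : (Lg * t + G) ^ 2 ≤ s ^ 2 := by
    have h0 : 0 ≤ Lg * t + G := by positivity
    nlinarith
  have key : g x + G * t + Lg / 2 * t ^ 2 ≤ 0 := by nlinarith
  linarith
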